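/- arXiv:2601.10149 — 4 statements merged into one kernel-verified Lean document; each statement's English description precedes it below -/
import Mathlib

section
/- Let A, B, C, D, F, T be real numbers with C ≠ 0, D ≠ 0 and D² = B² − 4AC. Define q(t) = (B+D)·exp(−D(T−t)/2) − (B−D)·exp(D(T−t)/2) and p(t) = (B+D)·exp(−D(T−t)/2) + (B−D)·exp(D(T−t)/2), and assume q(t)/(2D) > 0 for all t ∈ [0,T]. Define χ₁(t) = −B/(2C) + (D/(2C))·p(t)/q(t) and χ₀(t) = F·(−B(T−t)/(2C) − (1/C)·log(q(t)/(2D))). Then χ₀(T) = 0, and for every t ∈ [0,T] the function χ₀ is differentiable at t with derivative χ₀′(t) = −F·χ₁(t). -/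
/-!
`q(T) = 2D` makes the logarithm vanish at `T`. Since `q' = (D/2) p`, differentiating
`log (q/(2D))` gives `q'/q = D p / (2 q)`, which is exactly the `p/q` term of `χ₁`, while the
linear term contributes `B/(2C)`.
-/

open Real

theorem hasDerivAt_exp_mul_const_sub_div_two (k T t : ℝ) :
    HasDerivAt (fun s => exp (k * (T - s) / 2)) (-(k / 2) * exp (k * (T - t) / 2)) t :=
  ((((hasDerivAt_id' t).const_sub T).const_mul k).div_const 2).exp.congr_deriv (by ring)

theorem hasDerivAt_exp_pair_sub (a b D T t : ℝ) :
    HasDerivAt (fun s => a * exp (-D * (T - s) / 2) - b * exp (D * (T - s) / 2))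
      (D / 2 * (a * exp (-D * (T - t) / 2) + b * exp (D * (T - t) / 2))) t :=
  (((hasDerivAt_exp_mul_const_sub_div_two (-D) T t).const_mul a).sub
    ((hasDerivAt_exp_mul_const_sub_div_two D T t).const_mul b)).congr_deriv (by ring)

theorem HasDerivAt.log_div_const {f : ℝ → ℝ} {f' x c : ℝ} (hf : HasDerivAt f f' x)
    (hx : f x ≠ 0) (hc : c ≠ 0) :
    HasDerivAt (fun s => Real.log (f s / c)) (f' / f x) x :=
  ((hf.div_const c).log (div_ne_zero hx hc)).congr_deriv (div_div_div_cancel_right₀ hc _ _)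

theorem riccati_chi0_explicit_solution_general
    (B C D F T : ℝ) (hDne : D ≠ 0)
    (q p χ₁ χ₀ : ℝ → ℝ)
    (hq : ∀ t, q t = (B + D) * Real.exp (-D * (T - t) / 2)
        - (B - D) * Real.exp (D * (T - t) / 2))
    (hp : ∀ t, p t = (B + D) * Real.exp (-D * (T - t) / 2)
        + (B - D) * Real.exp (D * (T - t) / 2))
    (hqpos : ∀ t ∈ Set.Icc (0 : ℝ) T, 0 < q t / (2 * D))
    (hχ₁ : ∀ t, χ₁ t = -B / (2 * C) + (D / (2 * C)) * (p t / q t))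
    (hχ₀ : ∀ t, χ₀ t = F * (-B * (T - t) / (2 * C)
        - (1 / C) * Real.log (q t / (2 * D)))) :
    χ₀ T = 0 ∧
      ∀ t ∈ Set.Icc (0 : ℝ) T, HasDerivAt χ₀ (-F * χ₁ t) t := by
  have h2D : 2 * D ≠ 0 := mul_ne_zero two_ne_zero hDne
  refine ⟨?_, fun t ht => ?_⟩
  · have hqT : q T = 2 * D := by rw [hq]; simp only [sub_self, mul_zero, zero_div, exp_zero]; ring
    rw [hχ₀, hqT, div_self h2D]
    simp
  · have hqt : q t ≠ 0 := fun h => by simpa [h] using hqpos t ht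
    have hq' : HasDerivAt q (D / 2 * p t) t := by
      rw [funext hq, hp]
      exact hasDerivAt_exp_pair_sub _ _ D T t
    have hlin : HasDerivAt (fun s => -B * (T - s) / (2 * C)) (B / (2 * C)) t :=
      ((((hasDerivAt_id' t).const_sub T).const_mul (-B)).div_const (2 * C)).congr_deriv (by ring)
    rw [funext hχ₀, hχ₁]
    exact ((hlin.sub ((hq'.log_div_const hqt h2D).const_mul (1 / C))).const_mul F).congr_deriv
      (by ring)

/-- Explicit formula for the deterministic coefficient `χ₀` in the
exponential-affine representation `Y_t = exp(χ₀(t) + χ₁(t)X_t)` of the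
opportunity process for the Heston mean-variance hedging example:
`χ₀(T) = 0` and `χ₀'(t) = -F·χ₁(t)` on `[0, T]`. -/
theorem riccati_chi0_explicit_solution
    (A B C D F T : ℝ) (hC : C ≠ 0) (hDne : D ≠ 0)
    (hD : D ^ 2 = B ^ 2 - 4 * A * C)
    (q p χ₁ χ₀ : ℝ → ℝ)
    (hq : ∀ t, q t = (B + D) * Real.exp (-D * (T - t) / 2)
        - (B - D) * Real.exp (D * (T - t) / 2))
    (hp : ∀ t, p t = (B + D) * Real.exp (-D * (T - t) / 2)
        + (B - D) * Real.exp (D * (T - t) / 2))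
    (hqpos : ∀ t ∈ Set.Icc (0 : ℝ) T, 0 < q t / (2 * D))
    (hχ₁ : ∀ t, χ₁ t = -B / (2 * C) + (D / (2 * C)) * (p t / q t))
    (hχ₀ : ∀ t, χ₀ t = F * (-B * (T - t) / (2 * C)
        - (1 / C) * Real.log (q t / (2 * D)))) :
    χ₀ T = 0 ∧
      ∀ t ∈ Set.Icc (0 : ℝ) T, HasDerivAt χ₀ (-F * χ₁ t) t :=
  riccati_chi0_explicit_solution_general B C D F T hDne q p χ₁ χ₀ hq hp hqpos hχ₁ hχ₀
end

section
/- Let (Ω, 𝔉, ℙ) be a probability space, 𝔊 ⊆ 𝔉 a sub-σ-algebra, and let h ∈ (0, 1], c > 0, K ≥ 0, L ≥ 0, M ≥ 0. Let S₀ be a 𝔊-measurable real random variable with 𝔼[S₀²] ≤ L², let S₁ be a real random variable with |S₁| ≥ c almost surely and 𝔼[(S₁ − S₀)²] ≤ K·h, and let ΔW be a real random variable independent of 𝔊 with 𝔼[ΔW] = 0 and 𝔼[(ΔW)²] = h. Let β, s be real numbers with |β| ≤ M and |s| ≤ M, and set 𝔄 = 1 + β·h + s·ΔW. Then 𝔼[(1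 − S₁⁻¹·𝔄·S₀)²] ≤ (2K + 4M²L²)·c⁻²·h. -/
open MeasureTheory

/-- Scalar version of the estimate `𝔼[|I − [σ^{n+1}]⁻¹ Aⁿ σⁿ|²] ≤ CΔt`:
with `𝔄 = 1 + βh + s·ΔW`, `S₀` 𝔊-measurable with `𝔼[S₀²] ≤ L²`, `|S₁| ≥ c`
a.s., `𝔼[(S₁ − S₀)²] ≤ Kh`, and `ΔW` independent of 𝔊 with mean `0` and
variance `h ≤ 1`, one has `𝔼[(1 − S₁⁻¹𝔄S₀)²] ≤ (2K + 4M²L²)c⁻²h`. -/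
theorem inverse_diffusion_product_estimate
    {Ω : Type*} (m : MeasurableSpace Ω) [m0 : MeasurableSpace Ω] (P : Measure Ω) [IsProbabilityMeasure P]
    (hm : m ≤ m0)
    (h c K L M : ℝ) (hh : h ∈ Set.Ioc (0 : ℝ) 1) (hc : 0 < c)
    (hK : 0 ≤ K) (hL : 0 ≤ L) (hM : 0 ≤ M)
    (S₀ : Ω → ℝ) (hS₀meas : Measurable[m] S₀)
    (hS₀int : Integrable (fun ω => (S₀ ω) ^ 2) P)
    (hS₀ : ∫ ω, (S₀ ω) ^ 2 ∂P ≤ L ^ 2)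
    (S₁ : Ω → ℝ) (hS₁ : ∀ᵐ ω ∂P, c ≤ |S₁ ω|)
    (hS₁S₀int : Integrable (fun ω => (S₁ ω - S₀ ω) ^ 2) P)
    (hS₁S₀ : ∫ ω, (S₁ ω - S₀ ω) ^ 2 ∂P ≤ K * h)
    (ΔW : Ω → ℝ) (hΔWmeas : Measurable ΔW)
    (hindep : ProbabilityTheory.Indep (MeasurableSpace.comap ΔW inferInstance) m P)
    (hΔWint : Integrable ΔW P) (hΔWsqint : Integrable (fun ω => (ΔW ω) ^ 2) P)
    (hΔWmean : ∫ ω, ΔW ω ∂P = 0) (hΔWvar : ∫ ω, (ΔW ω) ^ 2 ∂P = h)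
    (β s : ℝ) (hβ : |β| ≤ M) (hs : |s| ≤ M) :
    ∫ ω, (1 - (S₁ ω)⁻¹ * (1 + β * h + s * ΔW ω) * S₀ ω) ^ 2 ∂P
      ≤ (2 * K + 4 * M ^ 2 * L ^ 2) * c⁻¹ ^ 2 * h := by
  obtain ⟨hh0, hh1⟩ := hh
  -- independence of (βh + sΔW)² and S₀²
  have hIF : ProbabilityTheory.IndepFun ΔW S₀ P :=
    (ProbabilityTheory.IndepFun_iff_Indep _ _ _).mpr
      (ProbabilityTheory.indep_of_indep_of_le_right hindep hS₀meas.comap_le)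
  have hφ : Measurable fun x : ℝ => (β * h + s * x) ^ 2 :=
    ((measurable_const.add (measurable_id.const_mul s)).pow_const 2)
  have hψ : Measurable fun x : ℝ => x ^ 2 := measurable_id.pow_const 2
  have hIF2 : ProbabilityTheory.IndepFun
      (fun ω => (β * h + s * ΔW ω) ^ 2) (fun ω => (S₀ ω) ^ 2) P :=
    hIF.comp hφ hψ
  -- integrability of (βh + sΔW)²
  have hDint : Integrable (fun ω => (β * h + s * ΔW ω) ^ 2) P := by
    have : (fun ω => (β * h + s * ΔW ω) ^ 2)
        = fun ω => (β * h) ^ 2 + (2 * β * h * s) * ΔW ω + s ^ 2 * (ΔW ω) ^ 2 := by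
      funext ω; ring
    rw [this]
    exact ((integrable_const ((β * h) ^ 2)).add (hΔWint.const_mul (2 * β * h * s))).add
      (hΔWsqint.const_mul (s ^ 2))
  -- ∫ (βh + sΔW)² = β²h² + s²h
  have hDval : ∫ ω, (β * h + s * ΔW ω) ^ 2 ∂P = β ^ 2 * h ^ 2 + s ^ 2 * h := by
    have h1 : (fun ω => (β * h + s * ΔW ω) ^ 2)
        = fun ω => (β * h) ^ 2 + ((2 * β * h * s) * ΔW ω + s ^ 2 * (ΔW ω) ^ 2) := by
      funext ω; ring
    have hi2 : Integrable (fun ω => 2 * β * h * s * ΔW ω) P := hΔWint.const_mul _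
    have hi3 : Integrable (fun ω => s ^ 2 * (ΔW ω) ^ 2) P := hΔWsqint.const_mul _
    have hi23 : Integrable (fun ω => 2 * β * h * s * ΔW ω + s ^ 2 * (ΔW ω) ^ 2) P :=
      hi2.add hi3
    rw [h1, integral_add (integrable_const ((β * h) ^ 2)) hi23,
      integral_add hi2 hi3, integral_const_mul, integral_const_mul, hΔWmean, hΔWvar,
      integral_const]
    simp; ring
  -- integrability and value of the product
  have hPint : Integrable (fun ω => (β * h + s * ΔW ω) ^ 2 * (S₀ ω) ^ 2) P :=
    hIF2.integrable_mul hDint hS₀int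
  have hPval : ∫ ω, (β * h + s * ΔW ω) ^ 2 * (S₀ ω) ^ 2 ∂P
      = (β ^ 2 * h ^ 2 + s ^ 2 * h) * ∫ ω, (S₀ ω) ^ 2 ∂P := by
    rw [← hDval]
    exact hIF2.integral_fun_mul_eq_mul_integral hDint.aestronglyMeasurable hS₀int.aestronglyMeasurable
  -- dominating function
  set g : Ω → ℝ := fun ω =>
    c⁻¹ ^ 2 * (2 * (S₁ ω - S₀ ω) ^ 2 + 2 * ((β * h + s * ΔW ω) ^ 2 * (S₀ ω) ^ 2))
    with hg
  have hgint : Integrable g P :=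
    (((hS₁S₀int.const_mul 2).add (hPint.const_mul 2)).const_mul _)
  -- pointwise bound
  have hpt : ∀ᵐ ω ∂P,
      (1 - (S₁ ω)⁻¹ * (1 + β * h + s * ΔW ω) * S₀ ω) ^ 2 ≤ g ω := by
    filter_upwards [hS₁] with ω hω
    have hne : S₁ ω ≠ 0 := by
      intro h0; rw [h0] at hω; simp at hω; linarith
    have key : 1 - (S₁ ω)⁻¹ * (1 + β * h + s * ΔW ω) * S₀ ω
        = (S₁ ω)⁻¹ * ((S₁ ω - S₀ ω) - (β * h + s * ΔW ω) * S₀ ω) := by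
      field_simp; ring
    have hc2 : c ^ 2 ≤ (S₁ ω) ^ 2 := by
      have := sq_abs (S₁ ω)
      nlinarith [abs_nonneg (S₁ ω)]
    have hinv : ((S₁ ω)⁻¹) ^ 2 ≤ c⁻¹ ^ 2 := by
      rw [inv_pow, inv_pow]
      exact inv_anti₀ (by positivity) hc2
    rw [key, mul_pow]
    have hsq : ((S₁ ω - S₀ ω) - (β * h + s * ΔW ω) * S₀ ω) ^ 2
        ≤ 2 * (S₁ ω - S₀ ω) ^ 2 + 2 * ((β * h + s * ΔW ω) ^ 2 * (S₀ ω) ^ 2) := by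
      nlinarith [sq_nonneg ((S₁ ω - S₀ ω) + (β * h + s * ΔW ω) * S₀ ω)]
    have h0 : (0:ℝ) ≤ ((S₁ ω - S₀ ω) - (β * h + s * ΔW ω) * S₀ ω) ^ 2 := sq_nonneg _
    calc ((S₁ ω)⁻¹) ^ 2 * ((S₁ ω - S₀ ω) - (β * h + s * ΔW ω) * S₀ ω) ^ 2
        ≤ c⁻¹ ^ 2 * ((S₁ ω - S₀ ω) - (β * h + s * ΔW ω) * S₀ ω) ^ 2 :=
          mul_le_mul_of_nonneg_right hinv h0
      _ ≤ g ω := by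
          rw [hg]
          exact mul_le_mul_of_nonneg_left hsq (by positivity)
  -- integrate
  have hmain : ∫ ω, (1 - (S₁ ω)⁻¹ * (1 + β * h + s * ΔW ω) * S₀ ω) ^ 2 ∂P
      ≤ ∫ ω, g ω ∂P :=
    integral_mono_of_nonneg (Filter.Eventually.of_forall fun ω => sq_nonneg _)
      hgint hpt
  have hgval : ∫ ω, g ω ∂P
      = c⁻¹ ^ 2 * (2 * ∫ ω, (S₁ ω - S₀ ω) ^ 2 ∂P
          + 2 * ((β ^ 2 * h ^ 2 + s ^ 2 * h) * ∫ ω, (S₀ ω) ^ 2 ∂P)) := by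
    have hj1 : Integrable (fun ω => 2 * (S₁ ω - S₀ ω) ^ 2) P := hS₁S₀int.const_mul 2
    have hj2 : Integrable
        (fun ω => 2 * ((β * h + s * ΔW ω) ^ 2 * (S₀ ω) ^ 2)) P := hPint.const_mul 2
    simp only [hg]
    rw [integral_const_mul, integral_add hj1 hj2,
      integral_const_mul, integral_const_mul, hPval]
  have hS₀nonneg : 0 ≤ ∫ ω, (S₀ ω) ^ 2 ∂P :=
    integral_nonneg fun ω => sq_nonneg _
  have hβ2 : β ^ 2 ≤ M ^ 2 := by
    rw [← sq_abs β]; exact pow_le_pow_left₀ (abs_nonneg β) hβ 2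
  have hs2 : s ^ 2 ≤ M ^ 2 := by
    rw [← sq_abs s]; exact pow_le_pow_left₀ (abs_nonneg s) hs 2
  have hcinv : (0:ℝ) ≤ c⁻¹ ^ 2 := by positivity
  calc ∫ ω, (1 - (S₁ ω)⁻¹ * (1 + β * h + s * ΔW ω) * S₀ ω) ^ 2 ∂P
      ≤ ∫ ω, g ω ∂P := hmain
    _ = c⁻¹ ^ 2 * (2 * ∫ ω, (S₁ ω - S₀ ω) ^ 2 ∂P
          + 2 * ((β ^ 2 * h ^ 2 + s ^ 2 * h) * ∫ ω, (S₀ ω) ^ 2 ∂P)) := hgval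
    _ ≤ (2 * K + 4 * M ^ 2 * L ^ 2) * c⁻¹ ^ 2 * h := by
        have e0 : h ^ 2 ≤ h := by nlinarith
        have e1 : β ^ 2 * h ^ 2 ≤ M ^ 2 * h :=
          le_trans (mul_le_mul_of_nonneg_right hβ2 (sq_nonneg h))
            (mul_le_mul_of_nonneg_left e0 (sq_nonneg M))
        have e2 : s ^ 2 * h ≤ M ^ 2 * h := mul_le_mul_of_nonneg_right hs2 hh0.le
        have hD2 : β ^ 2 * h ^ 2 + s ^ 2 * h ≤ 2 * M ^ 2 * h := by linarith
        have hprod : (β ^ 2 * h ^ 2 + s ^ 2 * h) * ∫ ω, (S₀ ω) ^ 2 ∂P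
            ≤ 2 * M ^ 2 * h * L ^ 2 :=
          mul_le_mul hD2 hS₀ hS₀nonneg (by positivity)
        calc c⁻¹ ^ 2 * (2 * ∫ ω, (S₁ ω - S₀ ω) ^ 2 ∂P
              + 2 * ((β ^ 2 * h ^ 2 + s ^ 2 * h) * ∫ ω, (S₀ ω) ^ 2 ∂P))
            ≤ c⁻¹ ^ 2 * (2 * (K * h) + 2 * (2 * M ^ 2 * h * L ^ 2)) :=
              mul_le_mul_of_nonneg_left (by linarith) hcinv
          _ = (2 * K + 4 * M ^ 2 * L ^ 2) * c⁻¹ ^ 2 * h := by ring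
end

section
/- Let h > 0, M ≥ 0, K ≥ 0 and let t₀ < t₁ < t₂ be real numbers with t₁ = t₀ + h and t₂ = t₁ + h. Let G₁ : ℝ → ℝ be twice continuously differentiable on [t₀, t₁] with |G₁″(s)| ≤ M for all s ∈ [t₀, t₁], and let G₂ : ℝ → ℝ be twice continuously differentiable on [t₁, t₂] with |G₂″(s)| ≤ M for all s ∈ [t₁, t₂]. Assume |G₂′(t₁) − G₁′(t₁)| ≤ K·h². Then |G₁(t₀) − G₁(t₁) + G₂(t₂) − G₂(t₁)| ≤ M·h² + K·h³. -/
/-!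
Expand `G₁` and `G₂` to first order around the common point `t₁`, with Lagrange remainders of
size at most `M h² / 2` each. The first-order terms `-h G₁'(t₁)` and `h G₂'(t₁)` combine into
`h (G₂'(t₁) - G₁'(t₁))`, which the matching condition bounds by `K h³`.
-/

open Set

theorem taylorWithinEval_one {E : Type*} [NormedAddCommGroup E] [NormedSpace ℝ E]
    (f : ℝ → E) (s : Set ℝ) (x₀ x : ℝ) :
    taylorWithinEval f 1 s x₀ x = f x₀ + (x - x₀) • derivWithin f s x₀ := by
  simp [taylorWithinEval_succ, iteratedDerivWithin_one]

theorem abs_sub_sub_mul_derivWithin_le {f : ℝ → ℝ} {x₀ x M : ℝ}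
    (hf : ContDiffOn ℝ 2 f (uIcc x₀ x))
    (hM : ∀ y ∈ uIcc x₀ x, |iteratedDerivWithin 2 f (uIcc x₀ x) y| ≤ M) :
    |f x - f x₀ - (x - x₀) * derivWithin f (uIcc x₀ x) x₀| ≤ M * (x - x₀) ^ 2 / 2 := by
  rcases eq_or_ne x₀ x with rfl | hx
  · simp
  have hf' : DifferentiableOn ℝ (iteratedDerivWithin 1 f (uIcc x₀ x)) (uIoo x₀ x) :=
    (hf.differentiableOn_iteratedDerivWithin (by norm_num) (uniqueDiffOn_uIcc hx)).mono
      Ioo_subset_Icc_self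
  obtain ⟨y, hy, hrem⟩ := taylor_mean_remainder_lagrange hx (hf.of_le (by norm_num)) hf'
  rw [taylorWithinEval_one, smul_eq_mul, ← sub_sub] at hrem
  rw [hrem]
  norm_num only [Nat.reduceAdd, Nat.factorial_two, Nat.cast_ofNat]
  rw [abs_div, abs_mul, abs_two, abs_of_nonneg (sq_nonneg (x - x₀))]
  gcongr
  exact hM y (Ioo_subset_Icc_self hy)

theorem two_sided_taylor_cancellation_general
    (h M K : ℝ) (hh : 0 < h)
    (t₀ t₁ t₂ : ℝ) (ht₁ : t₁ = t₀ + h) (ht₂ : t₂ = t₁ + h)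
    (G₁ G₂ : ℝ → ℝ)
    (hG₁ : ContDiffOn ℝ 2 G₁ (Icc t₀ t₁))
    (hG₁'' : ∀ s ∈ Icc t₀ t₁, |iteratedDerivWithin 2 G₁ (Icc t₀ t₁) s| ≤ M)
    (hG₂ : ContDiffOn ℝ 2 G₂ (Icc t₁ t₂))
    (hG₂'' : ∀ s ∈ Icc t₁ t₂, |iteratedDerivWithin 2 G₂ (Icc t₁ t₂) s| ≤ M)
    (hmatch : |derivWithin G₂ (Icc t₁ t₂) t₁ - derivWithin G₁ (Icc t₀ t₁) t₁|
        ≤ K * h ^ 2) :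
    |G₁ t₀ - G₁ t₁ + G₂ t₂ - G₂ t₁| ≤ M * h ^ 2 + K * h ^ 3 := by
  set D₁ := derivWithin G₁ (Icc t₀ t₁) t₁
  set D₂ := derivWithin G₂ (Icc t₁ t₂) t₁
  have hleft := abs_sub_sub_mul_derivWithin_le (f := G₁) (x₀ := t₁) (x := t₀) (M := M)
  have hright := abs_sub_sub_mul_derivWithin_le (f := G₂) (x₀ := t₁) (x := t₂) (M := M)
  rw [uIcc_of_ge (by linarith), show t₀ - t₁ = -h by linarith, neg_sq] at hleft
  rw [uIcc_of_le (by linarith), show t₂ - t₁ = h by linarith] at hright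
  have hmismatch : |h * (D₂ - D₁)| ≤ K * h ^ 3 := by
    rw [abs_mul, abs_of_pos hh]
    calc h * |D₂ - D₁| ≤ h * (K * h ^ 2) := by gcongr
      _ = K * h ^ 3 := by ring
  calc |G₁ t₀ - G₁ t₁ + G₂ t₂ - G₂ t₁|
      = |(G₁ t₀ - G₁ t₁ - -h * D₁) + (G₂ t₂ - G₂ t₁ - h * D₂) + h * (D₂ - D₁)| := by
        congr 1; ring
    _ ≤ M * h ^ 2 / 2 + M * h ^ 2 / 2 + K * h ^ 3 :=
        (abs_add_three _ _ _).trans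
          (add_le_add_three (hleft hG₁ hG₁'') (hright hG₂ hG₂'') hmismatch)
    _ = M * h ^ 2 + K * h ^ 3 := by ring

/-- Two-sided Taylor cancellation around the common midpoint `t₁`: if `G₁` is
`C²` on `[t₀, t₁]` and `G₂` is `C²` on `[t₁, t₂]` with second derivatives
bounded by `M`, `t₁ = t₀ + h`, `t₂ = t₁ + h`, and the derivatives at `t₁`
differ by at most `K·h²`, then
`|G₁(t₀) − G₁(t₁) + G₂(t₂) − G₂(t₁)| ≤ M·h² + K·h³`. -/
theorem two_sided_taylor_cancellation
    (h M K : ℝ) (hh : 0 < h) (hM : 0 ≤ M) (hK : 0 ≤ K)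
    (t₀ t₁ t₂ : ℝ) (ht₁ : t₁ = t₀ + h) (ht₂ : t₂ = t₁ + h)
    (G₁ G₂ : ℝ → ℝ)
    (hG₁ : ContDiffOn ℝ 2 G₁ (Icc t₀ t₁))
    (hG₁'' : ∀ s ∈ Icc t₀ t₁, |iteratedDerivWithin 2 G₁ (Icc t₀ t₁) s| ≤ M)
    (hG₂ : ContDiffOn ℝ 2 G₂ (Icc t₁ t₂))
    (hG₂'' : ∀ s ∈ Icc t₁ t₂, |iteratedDerivWithin 2 G₂ (Icc t₁ t₂) s| ≤ M)
    (hmatch : |derivWithin G₂ (Icc t₁ t₂) t₁ - derivWithin G₁ (Icc t₀ t₁) t₁|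
        ≤ K * h ^ 2) :
    |G₁ t₀ - G₁ t₁ + G₂ t₂ - G₂ t₁| ≤ M * h ^ 2 + K * h ^ 3 :=
  two_sided_taylor_cancellation_general h M K hh t₀ t₁ t₂ ht₁ ht₂ G₁ G₂ hG₁ hG₁'' hG₂ hG₂'' hmatch
end

section
/- Let h > 0, M ≥ 0, a ∈ ℝ, and let f₁, f₂ : ℝ → ℝ be twice continuously differentiable on [a, a + 2h] with |f₁″(s)| ≤ M and |f₂″(s)| ≤ M for all s ∈ [a, a + 2h]. Set f = f₁ + f₂. Then |∫ₐ^{a+h} (f(s) − f₁(a) − f₂(a+h)) ds + ∫_{a+h}^{a+2h} (f(s) − f₂(a+h) − f₁(a+2h)) ds| ≤ 2·M·h³. -/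
/-!
Over the two steps the rule equals the composite trapezoidal rule for `f = f₁ + f₂` corrected by
`(h / 2) (d a - 2 d (a + h) + d (a + 2h))` with `d = f₂ - f₁`. Since `|f''|, |d''| ≤ 2M`, each
trapezoidal error is at most `2M h³ / 12`, and the second difference of `d` is at most `2M h²`:
it is the increment over `[a, a + h]` of `t ↦ d (t + h) - d t`, whose derivative
`d' (t + h) - d' t` is bounded by `2M h`. Altogether the error is at most `(1/3 + 1) M h³`.
-/

open Set MeasureTheory

section IteratedDerivWithin

variable {𝕜 F : Type*} [NontriviallyNormedField 𝕜] [NormedAddCommGroup F] [NormedSpace 𝕜 F]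
  {f g : 𝕜 → F} {s t : Set 𝕜} {n : ℕ} {x : 𝕜}

theorem iteratedDerivWithin_subset (st : s ⊆ t) (hs : UniqueDiffOn 𝕜 s) (ht : UniqueDiffOn 𝕜 t)
    (hf : ContDiffOn 𝕜 n f t) (hx : x ∈ s) :
    iteratedDerivWithin n f s x = iteratedDerivWithin n f t x := by
  simp only [iteratedDerivWithin_eq_iteratedFDerivWithin, iteratedFDerivWithin_subset st hs ht hf hx]

theorem iteratedDerivWithin_succ_eq_zero_of_notMem (hs : IsClosed s) (hx : x ∉ s) :
    iteratedDerivWithin (n + 1) f s x = 0 := by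
  rw [iteratedDerivWithin_succ]
  exact derivWithin_zero_of_notMem_closure (by rwa [hs.closure_eq])

theorem norm_iteratedDerivWithin_add_le (hx : x ∈ s) (hs : UniqueDiffOn 𝕜 s)
    (hf : ContDiffWithinAt 𝕜 n f s x) (hg : ContDiffWithinAt 𝕜 n g s x) :
    ‖iteratedDerivWithin n (f + g) s x‖
      ≤ ‖iteratedDerivWithin n f s x‖ + ‖iteratedDerivWithin n g s x‖ := by
  rw [iteratedDerivWithin_add hx hs hf hg]
  exact norm_add_le _ _

theorem norm_iteratedDerivWithin_sub_le (hx : x ∈ s) (hs : UniqueDiffOn 𝕜 s)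
    (hf : ContDiffWithinAt 𝕜 n f s x) (hg : ContDiffWithinAt 𝕜 n g s x) :
    ‖iteratedDerivWithin n (f - g) s x‖
      ≤ ‖iteratedDerivWithin n f s x‖ + ‖iteratedDerivWithin n g s x‖ := by
  rw [iteratedDerivWithin_sub hx hs hf hg]
  exact norm_sub_le _ _

end IteratedDerivWithin

theorem abs_trapezoidal_error_one_le {f : ℝ → ℝ} {a b p q K : ℝ} (hpq : p < q)
    (hsub : Icc p q ⊆ Icc a b) (hf : ContDiffOn ℝ 2 f (Icc a b))
    (hK : ∀ x ∈ Icc a b, |iteratedDerivWithin 2 f (Icc a b) x| ≤ K) :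
    |trapezoidal_error f 1 p q| ≤ (q - p) ^ 3 * K / 12 := by
  have hp : p ∈ Icc p q := left_mem_Icc.2 hpq.le
  have hab : a < b := (hsub hp).1.trans_lt (hpq.trans_le (hsub (right_mem_Icc.2 hpq.le)).2)
  -- `trapezoidal_error_le_of_c2` wants the bound at every point; off `Icc p q` the
  -- second derivative within `Icc p q` is the junk value `0`.
  have hbound : ∀ x, |iteratedDerivWithin 2 f (Icc p q) x| ≤ K := by
    intro x
    by_cases hx : x ∈ Icc p q
    · rw [iteratedDerivWithin_subset hsub (uniqueDiffOn_Icc hpq) (uniqueDiffOn_Icc hab) hf hx]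
      exact hK x (hsub hx)
    · rw [iteratedDerivWithin_succ_eq_zero_of_notMem isClosed_Icc hx, abs_zero]
      exact (abs_nonneg _).trans (hK p (hsub hp))
  rw [← uIcc_of_le hpq.le] at hbound
  simpa [abs_of_pos (sub_pos.2 hpq)] using
    trapezoidal_error_le_of_c2 (uIcc_of_le hpq.le ▸ hf.mono hsub) hbound one_pos

theorem abs_derivWithin_sub_le {g : ℝ → ℝ} {s : Set ℝ} {K : ℝ} (hconv : Convex ℝ s)
    (hs : UniqueDiffOn ℝ s) (hg : ContDiffOn ℝ 2 g s)
    (hK : ∀ x ∈ s, |iteratedDerivWithin 2 g s x| ≤ K) {u v : ℝ} (hu : u ∈ s) (hv : v ∈ s) :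
    |derivWithin g s u - derivWithin g s v| ≤ K * |u - v| := by
  have hdiff : DifferentiableOn ℝ (derivWithin g s) s :=
    (hg.derivWithin hs (m := 1) (by norm_num)).differentiableOn one_ne_zero
  refine hconv.norm_image_sub_le_of_norm_derivWithin_le hdiff (fun x hx => ?_) hv hu
  simpa [iteratedDerivWithin_succ', iteratedDerivWithin_one] using hK x hx

theorem abs_second_difference_le {g : ℝ → ℝ} {a h K : ℝ} (hh : 0 < h)
    (hg : ContDiffOn ℝ 2 g (Icc a (a + 2 * h)))
    (hK : ∀ x ∈ Icc a (a + 2 * h), |iteratedDerivWithin 2 g (Icc a (a + 2 * h)) x| ≤ K) :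
    |g a - 2 * g (a + h) + g (a + 2 * h)| ≤ K * h ^ 2 := by
  set I := Icc a (a + 2 * h)
  set g' := derivWithin g I
  have hJI : Icc a (a + h) ⊆ I := Icc_subset_Icc le_rfl (by linarith)
  have hshift : MapsTo (· + h) (Icc a (a + h)) I :=
    fun t ht => ⟨by linarith [ht.1], by linarith [ht.2]⟩
  have hg' : ∀ t ∈ I, HasDerivWithinAt g (g' t) I t := fun t ht =>
    ((hg.differentiableOn two_ne_zero) t ht).hasDerivWithinAt
  have hψ : ∀ t ∈ Icc a (a + h),
      HasDerivWithinAt (fun t => g (t + h) - g t) (g' (t + h) - g' t) (Icc a (a + h)) t :=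
    fun t ht => by
      have hshifted :=
        (hg' (t + h) (hshift ht)).comp t ((hasDerivWithinAt_id t _).add_const h) hshift
      rw [mul_one] at hshifted
      exact hshifted.sub ((hg' t (hJI ht)).mono hJI)
  have hψ' : ∀ t ∈ Icc a (a + h), ‖g' (t + h) - g' t‖ ≤ K * h := fun t ht => by
    simpa [abs_of_pos hh] using abs_derivWithin_sub_le (convex_Icc _ _)
      (uniqueDiffOn_Icc (by linarith)) hg hK (hshift ht) (hJI ht)
  have hincr := (convex_Icc a (a + h)).norm_image_sub_le_of_norm_hasDerivWithin_le hψ hψ'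
    (left_mem_Icc.2 (by linarith)) (right_mem_Icc.2 (by linarith))
  rw [Real.norm_eq_abs, Real.norm_eq_abs, add_sub_cancel_left, abs_of_pos hh,
    add_assoc, ← two_mul] at hincr
  calc |g a - 2 * g (a + h) + g (a + 2 * h)|
        = |g (a + 2 * h) - g (a + h) - (g (a + h) - g a)| := by ring_nf
    _ ≤ K * h ^ 2 := by linarith

theorem intervalIntegral.integral_sub_const {f : ℝ → ℝ} {p q : ℝ}
    (hf : IntervalIntegrable f volume p q) (c : ℝ) :
    ∫ s in p..q, f s - c = (∫ s in p..q, f s) - (q - p) * c := by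
  rw [intervalIntegral.integral_sub hf intervalIntegrable_const, intervalIntegral.integral_const,
    smul_eq_mul]

theorem alternating_splitting_eq_sub_trapezoidal_error {f₁ f₂ : ℝ → ℝ} {a h : ℝ}
    (h₁ : IntervalIntegrable (f₁ + f₂) volume a (a + h))
    (h₂ : IntervalIntegrable (f₁ + f₂) volume (a + h) (a + 2 * h)) :
    (∫ s in a..(a + h), (f₁ s + f₂ s) - f₁ a - f₂ (a + h))
        + ∫ s in (a + h)..(a + 2 * h), (f₁ s + f₂ s) - f₂ (a + h) - f₁ (a + 2 * h)
      = h / 2 * ((f₂ - f₁) a - 2 * (f₂ - f₁) (a + h) + (f₂ - f₁) (a + 2 * h))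
        - (trapezoidal_error (f₁ + f₂) 1 a (a + h)
          + trapezoidal_error (f₁ + f₂) 1 (a + h) (a + 2 * h)) := by
  simp_rw [sub_sub]
  rw [intervalIntegral.integral_sub_const (f := fun s => f₁ s + f₂ s) h₁,
    intervalIntegral.integral_sub_const (f := fun s => f₁ s + f₂ s) h₂]
  simp only [trapezoidal_error, trapezoidal_integral_one, Pi.add_apply, Pi.sub_apply]
  ring

/-- Deterministic core of the combined truncation error estimate
`R_Y^n + R̃_Y^{n+1}` of the alternating splitting quadrature: over two
consecutive steps the rule treating `f₁` explicitly and `f₂` implicitly on the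
first step and swapping their roles on the second step has third-order local
error. -/
theorem alternating_splitting_two_step_error
    (h M a : ℝ) (hh : 0 < h) (hM : 0 ≤ M)
    (f₁ f₂ : ℝ → ℝ)
    (hf₁ : ContDiffOn ℝ 2 f₁ (Icc a (a + 2 * h)))
    (hf₂ : ContDiffOn ℝ 2 f₂ (Icc a (a + 2 * h)))
    (hf₁'' : ∀ s ∈ Icc a (a + 2 * h),
      |iteratedDerivWithin 2 f₁ (Icc a (a + 2 * h)) s| ≤ M)
    (hf₂'' : ∀ s ∈ Icc a (a + 2 * h),
      |iteratedDerivWithin 2 f₂ (Icc a (a + 2 * h)) s| ≤ M) :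
    |(∫ s in a..(a + h), (f₁ s + f₂ s) - f₁ a - f₂ (a + h))
        + ∫ s in (a + h)..(a + 2 * h), (f₁ s + f₂ s) - f₂ (a + h) - f₁ (a + 2 * h)|
      ≤ 2 * M * h ^ 3 := by
  have hI : UniqueDiffOn ℝ (Icc a (a + 2 * h)) := uniqueDiffOn_Icc (by linarith)
  have hsum : ∀ s ∈ Icc a (a + 2 * h),
      |iteratedDerivWithin 2 (f₁ + f₂) (Icc a (a + 2 * h)) s| ≤ 2 * M := fun s hs =>
    (norm_iteratedDerivWithin_add_le hs hI (hf₁ s hs) (hf₂ s hs)).trans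
      (two_mul M ▸ add_le_add (hf₁'' s hs) (hf₂'' s hs))
  have hdiff : ∀ s ∈ Icc a (a + 2 * h),
      |iteratedDerivWithin 2 (f₂ - f₁) (Icc a (a + 2 * h)) s| ≤ 2 * M := fun s hs =>
    (norm_iteratedDerivWithin_sub_le hs hI (hf₂ s hs) (hf₁ s hs)).trans
      (two_mul M ▸ add_le_add (hf₂'' s hs) (hf₁'' s hs))
  have hleft : Icc a (a + h) ⊆ Icc a (a + 2 * h) := Icc_subset_Icc le_rfl (by linarith)
  have hright : Icc (a + h) (a + 2 * h) ⊆ Icc a (a + 2 * h) := Icc_subset_Icc (by linarith) le_rfl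
  have hcont : ContinuousOn (f₁ + f₂) (Icc a (a + 2 * h)) := (hf₁.add hf₂).continuousOn
  have E₁ := abs_trapezoidal_error_one_le (by linarith) hleft (hf₁.add hf₂) hsum
  have E₂ := abs_trapezoidal_error_one_le (by linarith) hright (hf₁.add hf₂) hsum
  have D := abs_second_difference_le hh (hf₂.sub hf₁) hdiff
  rw [add_sub_cancel_left] at E₁
  rw [show a + 2 * h - (a + h) = h by ring] at E₂
  rw [alternating_splitting_eq_sub_trapezoidal_error
    ((hcont.mono hleft).intervalIntegrable_of_Icc (by linarith))
    ((hcont.mono hright).intervalIntegrable_of_Icc (by linarith))]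
  have hMh : 0 ≤ M * h ^ 3 := by positivity
  calc _ ≤ |h / 2 * ((f₂ - f₁) a - 2 * (f₂ - f₁) (a + h) + (f₂ - f₁) (a + 2 * h))|
        + (|trapezoidal_error (f₁ + f₂) 1 a (a + h)|
          + |trapezoidal_error (f₁ + f₂) 1 (a + h) (a + 2 * h)|) :=
        (abs_sub _ _).trans (add_le_add le_rfl (abs_add_le _ _))
    _ ≤ h / 2 * (2 * M * h ^ 2) + (h ^ 3 * (2 * M) / 12 + h ^ 3 * (2 * M) / 12) := by
        rw [abs_mul, abs_of_pos (half_pos hh)]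
        gcongr
        exacts [D, E₁, E₂]
    _ ≤ 2 * M * h ^ 3 := by linarith
end
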